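/- arXiv:2101.10720 — 2 statements merged into one kernel-verified Lean document; each statement's English description precedes it below -/
import Mathlib

section
/- Freshly generated names are underivable: in the ν-calculus, if r is a name not occurring in a closed substitution (model) ξ, then there is no name-free term M, typed over the domain of ξ, such that closing M by ξ evaluates to the name r. -/
/-! Types of the ν-calculus: Unit, Bool, the name type Nm, products and arrows. -/
inductive Ty : Type
  | unit : Ty
  | bool : Ty
  | nm : Ty
  | prod : Ty → Ty → Ty
  | arrow : Ty → Ty → Ty
  deriving DecidableEq

/-! Terms of the ν-calculus, with named variables (names and variables are ℕ). -/
inductive Tm : Type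
  | var : ℕ → Tm
  | unit : Tm
  | tt : Tm
  | ff : Tm
  | name : ℕ → Tm
  | gensym : Tm
  | lam : ℕ → Ty → Tm → Tm
  | app : Tm → Tm → Tm
  | pair : Tm → Tm → Tm
  | fst : Tm → Tm
  | snd : Tm → Tm
  | cond : Tm → Tm → Tm → Tm
  | letin : ℕ → Tm → Tm → Tm
  | eq : Tm → Tm → Tm
  deriving DecidableEq

/-- The finite set of name constants occurring in a term. -/
def AN : Tm → Finset ℕ
  | .name r => {r}
  | .lam _ _ M => AN M
  | .app M N => AN M ∪ AN N
  | .pair M N => AN M ∪ AN N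
  | .fst M => AN M
  | .snd M => AN M
  | .cond M N₁ N₂ => AN M ∪ AN N₁ ∪ AN N₂
  | .letin _ M N => AN M ∪ AN N
  | .eq M N => AN M ∪ AN N
  | _ => ∅

/-- Free variables of a term. -/
def FV : Tm → Finset ℕ
  | .var x => {x}
  | .lam x _ M => FV M \ {x}
  | .app M N => FV M ∪ FV N
  | .pair M N => FV M ∪ FV N
  | .fst M => FV M
  | .snd M => FV M
  | .cond M N₁ N₂ => FV M ∪ FV N₁ ∪ FV N₂
  | .letin x M N => FV M ∪ (FV N \ {x})
  | .eq M N => FV M ∪ FV N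
  | _ => ∅

/-- Substitution of a closed term `V` for the variable `x` (no capture since `V` is closed). -/
def subst (x : ℕ) (V : Tm) : Tm → Tm
  | .var y => if y = x then V else .var y
  | .lam y α M => if y = x then .lam y α M else .lam y α (subst x V M)
  | .app M N => .app (subst x V M) (subst x V N)
  | .pair M N => .pair (subst x V M) (subst x V N)
  | .fst M => .fst (subst x V M)
  | .snd M => .snd (subst x V M)
  | .cond M N₁ N₂ => .cond (subst x V M) (subst x V N₁) (subst x V N₂)
  | .letin y M N => .letin y (subst x V M) (if y = x then N else subst x V N)
  | .eq M N => .eq (subst x V M) (subst x V N)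
  | t => t

/-- Values. -/
inductive IsValue : Tm → Prop
  | var : ∀ x, IsValue (.var x)
  | unit : IsValue .unit
  | tt : IsValue .tt
  | ff : IsValue .ff
  | name : ∀ r, IsValue (.name r)
  | gensym : IsValue .gensym
  | lam : ∀ x α M, IsValue (.lam x α M)
  | pair : ∀ {V W}, IsValue V → IsValue W → IsValue (.pair V W)

/-- Typing contexts: ordered lists of variable/type pairs, later entries more recent. -/
abbrev Ctx := List (ℕ × Ty)

/-- Look up the most recent binding of `x` in `Γ`. -/
def lookupVar (Γ : Ctx) (x : ℕ) : Option Ty :=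
  (Γ.reverse.find? (fun p => p.1 == x)).map Prod.snd

/-- Typing judgement `Γ ⊢ M : α` of the ν-calculus. -/
inductive Typed : Ctx → Tm → Ty → Prop
  | var : ∀ {Γ x α}, lookupVar Γ x = some α → Typed Γ (.var x) α
  | unit : ∀ {Γ}, Typed Γ .unit .unit
  | tt : ∀ {Γ}, Typed Γ .tt .bool
  | ff : ∀ {Γ}, Typed Γ .ff .bool
  | name : ∀ {Γ} (r : ℕ), Typed Γ (.name r) .nm
  | gensym : ∀ {Γ}, Typed Γ .gensym (.arrow .unit .nm)
  | lam : ∀ {Γ x α β M}, Typed (Γ ++ [(x, α)]) M β → Typed Γ (.lam x α M) (.arrow α β)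
  | app : ∀ {Γ M N α β}, Typed Γ M (.arrow α β) → Typed Γ N α → Typed Γ (.app M N) β
  | pair : ∀ {Γ M N α β}, Typed Γ M α → Typed Γ N β → Typed Γ (.pair M N) (.prod α β)
  | fst : ∀ {Γ M α β}, Typed Γ M (.prod α β) → Typed Γ (.fst M) α
  | snd : ∀ {Γ M α β}, Typed Γ M (.prod α β) → Typed Γ (.snd M) β
  | cond : ∀ {Γ M N₁ N₂ α}, Typed Γ M .bool → Typed Γ N₁ α → Typed Γ N₂ α →
      Typed Γ (.cond M N₁ N₂) α
  | letin : ∀ {Γ x M N α β}, Typed Γ M α → Typed (Γ ++ [(x, α)]) N β →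
      Typed Γ (.letin x M N) β
  | eqNm : ∀ {Γ M N}, Typed Γ M .nm → Typed Γ N .nm → Typed Γ (.eq M N) .bool
  | eqBool : ∀ {Γ M N}, Typed Γ M .bool → Typed Γ N .bool → Typed Γ (.eq M N) .bool

/-- Big-step call-by-value evaluation on configurations `(G, M) ⇓ (G', V)` where `G`
is the set of names generated so far. -/
inductive Eval : Finset ℕ → Tm → Finset ℕ → Tm → Prop
  | val : ∀ {G V}, IsValue V → Eval G V G V
  | app : ∀ {G G₁ G₂ G₃ M N B V W x α},
      Eval G M G₁ (.lam x α B) → Eval G₁ N G₂ W → IsValue W →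
      Eval G₂ (subst x W B) G₃ V → Eval G (.app M N) G₃ V
  | gensym : ∀ {G G₁ G₂ M N} (r : ℕ),
      Eval G M G₁ .gensym → Eval G₁ N G₂ .unit → r ∉ G₂ →
      Eval G (.app M N) (insert r G₂) (.name r)
  | pair : ∀ {G G₁ G₂ M N V W},
      Eval G M G₁ V → Eval G₁ N G₂ W → Eval G (.pair M N) G₂ (.pair V W)
  | fst : ∀ {G G₁ M V W}, Eval G M G₁ (.pair V W) → Eval G (.fst M) G₁ V
  | snd : ∀ {G G₁ M V W}, Eval G M G₁ (.pair V W) → Eval G (.snd M) G₁ W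
  | condT : ∀ {G G₁ G₂ M N₁ N₂ V},
      Eval G M G₁ .tt → Eval G₁ N₁ G₂ V → Eval G (.cond M N₁ N₂) G₂ V
  | condF : ∀ {G G₁ G₂ M N₁ N₂ V},
      Eval G M G₁ .ff → Eval G₁ N₂ G₂ V → Eval G (.cond M N₁ N₂) G₂ V
  | letin : ∀ {G G₁ G₂ M N W V x},
      Eval G M G₁ W → IsValue W → Eval G₁ (subst x W N) G₂ V →
      Eval G (.letin x M N) G₂ V
  | eqT : ∀ {G G₁ G₂ M N r},
      Eval G M G₁ (.name r) → Eval G₁ N G₂ (.name r) → Eval G (.eq M N) G₂ .tt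
  | eqF : ∀ {G G₁ G₂ M N r s},
      Eval G M G₁ (.name r) → Eval G₁ N G₂ (.name s) → r ≠ s →
      Eval G (.eq M N) G₂ .ff
  | eqBoolT : ∀ {G G₁ G₂ M N b},
      Eval G M G₁ b → Eval G₁ N G₂ b → (b = Tm.tt ∨ b = Tm.ff) →
      Eval G (.eq M N) G₂ .tt
  | eqBoolF : ∀ {G G₁ G₂ M N b₁ b₂},
      Eval G M G₁ b₁ → Eval G₁ N G₂ b₂ →
      ((b₁ = Tm.tt ∧ b₂ = Tm.ff) ∨ (b₁ = Tm.ff ∧ b₂ = Tm.tt)) →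
      Eval G (.eq M N) G₂ .ff

/-- Types not mentioning the name type `Nm`. -/
def NmFreeTy : Ty → Prop
  | .nm => False
  | .prod a b => NmFreeTy a ∧ NmFreeTy b
  | .arrow a b => NmFreeTy a ∧ NmFreeTy b
  | _ => True

/-- Base types β ::= Unit | Bool | β × β. -/
inductive BaseTy : Ty → Prop
  | unit : BaseTy .unit
  | bool : BaseTy .bool
  | prod : ∀ {a b}, BaseTy a → BaseTy b → BaseTy (.prod a b)

/-- Terms with no occurrence of `gensym`. -/
def NoGensym : Tm → Prop
  | .gensym => False
  | .lam _ _ M => NoGensym M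
  | .app M N => NoGensym M ∧ NoGensym N
  | .pair M N => NoGensym M ∧ NoGensym N
  | .fst M => NoGensym M
  | .snd M => NoGensym M
  | .cond M N₁ N₂ => NoGensym M ∧ NoGensym N₁ ∧ NoGensym N₂
  | .letin _ M N => NoGensym M ∧ NoGensym N
  | .eq M N => NoGensym M ∧ NoGensym N
  | _ => True

/-- Logical expressions: variables, constants, pairing and projections. -/
def IsExpr : Tm → Prop
  | .var _ => True
  | .unit => True
  | .tt => True
  | .ff => True
  | .pair e e' => IsExpr e ∧ IsExpr e'
  | .fst e => IsExpr e
  | .snd e => IsExpr e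
  | _ => False

def boolVal : Bool → Tm
  | true => .tt
  | false => .ff

/-- Contextual equivalence of closed terms `M, N` of type `α` with names in `G`:
every boolean-valued closing context (a term with one free variable, the hole)
with names in `G` evaluates `M` and `N` to the same boolean. -/
def CtxEquiv (G : Finset ℕ) (α : Ty) (M N : Tm) : Prop :=
  ∀ (h : ℕ) (C : Tm) (b : Bool), Typed [(h, α)] C .bool → AN C ⊆ G →
    ((∃ G', Eval G (subst h M C) G' (boolVal b)) ↔
     (∃ G', Eval G (subst h N C) G' (boolVal b)))

/-- Models: finite maps from variables to closed values, as ordered lists. -/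
abbrev Model := List (ℕ × Tm)

/-- All names occurring in a model. -/
def ANModel (ξ : Model) : Finset ℕ := ξ.foldr (fun p s => AN p.2 ∪ s) ∅

/-- Closure of a term by a model: substitute each binding. -/
def msubst (ξ : Model) (M : Tm) : Tm := ξ.foldl (fun N p => subst p.1 p.2 N) M

/-- Look up the value of `x` in the model `ξ`. -/
def modelLookup (ξ : Model) (x : ℕ) : Option Tm :=
  (ξ.reverse.find? (fun p => p.1 == x)).map Prod.snd

/-- A model is typed by a context when it binds the same variables, in order,
to closed values of the corresponding types. -/
inductive ModelTyped : Ctx → Model → Prop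
  | nil : ModelTyped [] []
  | cons : ∀ {Γ ξ x α V}, IsValue V → Typed [] V α → ModelTyped Γ ξ →
      ModelTyped ((x, α) :: Γ) ((x, V) :: ξ)

/-- Single-step model extension: add one binding `y : V` where `V` is derived
from the current model by a name-free term. -/
def ModelExt1 (p q : Ctx × Model) : Prop :=
  ∃ (y : ℕ) (α : Ty) (M V : Tm) (G' : Finset ℕ),
    q.1 = p.1 ++ [(y, α)] ∧ q.2 = p.2 ++ [(y, V)] ∧
    AN M = ∅ ∧ Typed p.1 M α ∧ IsValue V ∧
    Eval (ANModel p.2) (msubst p.2 M) G' V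

/-- Model extension `ξ ⪯* ξ′`: reflexive-transitive closure of single steps. -/
def ModelExt : Ctx × Model → Ctx × Model → Prop := Relation.ReflTransGen ModelExt1


lemma AN_subst (x : ℕ) (V M : Tm) : AN (subst x V M) ⊆ AN M ∪ AN V := by
  induction M with
  | var y => simp only [subst]; split <;> simp [AN]
  | lam y α M ih =>
      simp only [subst]; split
      · simp [AN]
      · simpa [AN] using ih
  | app M N ihM ihN =>
      simp only [subst, AN]
      intro a ha
      rcases Finset.mem_union.mp ha with h | h
      · rcases Finset.mem_union.mp (ihM h) with h | h <;> simp [h]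
      · rcases Finset.mem_union.mp (ihN h) with h | h <;> simp [h]
  | pair M N ihM ihN =>
      simp only [subst, AN]
      intro a ha
      rcases Finset.mem_union.mp ha with h | h
      · rcases Finset.mem_union.mp (ihM h) with h | h <;> simp [h]
      · rcases Finset.mem_union.mp (ihN h) with h | h <;> simp [h]
  | fst M ih => simpa [subst, AN] using ih
  | snd M ih => simpa [subst, AN] using ih
  | cond M N₁ N₂ ihM ih1 ih2 =>
      simp only [subst, AN]
      intro a ha
      rcases Finset.mem_union.mp ha with h | h
      · rcases Finset.mem_union.mp h with h | h
        · rcases Finset.mem_union.mp (ihM h) with h | h <;> simp [h]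
        · rcases Finset.mem_union.mp (ih1 h) with h | h <;> simp [h]
      · rcases Finset.mem_union.mp (ih2 h) with h | h <;> simp [h]
  | letin y M N ihM ihN =>
      simp only [subst, AN]
      intro a ha
      rcases Finset.mem_union.mp ha with h | h
      · rcases Finset.mem_union.mp (ihM h) with h | h <;> simp [h]
      · split at h
        · simp [h]
        · rcases Finset.mem_union.mp (ihN h) with h | h <;> simp [h]
  | eq M N ihM ihN =>
      simp only [subst, AN]
      intro a ha
      rcases Finset.mem_union.mp ha with h | h
      · rcases Finset.mem_union.mp (ihM h) with h | h <;> simp [h]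
      · rcases Finset.mem_union.mp (ihN h) with h | h <;> simp [h]
  | _ => simp [subst, AN]

lemma AN_msubst (ξ : Model) (M : Tm) : AN (msubst ξ M) ⊆ AN M ∪ ANModel ξ := by
  induction ξ generalizing M with
  | nil => simp [msubst, ANModel]
  | cons p ξ ih =>
      intro a ha
      have h1 : msubst (p :: ξ) M = msubst ξ (subst p.1 p.2 M) := rfl
      rw [h1] at ha
      rcases Finset.mem_union.mp (ih _ ha) with h | h
      · rcases Finset.mem_union.mp (AN_subst _ _ _ h) with h | h
        · simp [h]
        · exact Finset.mem_union_right _ (show a ∈ ANModel (p :: ξ) from Finset.mem_union_left _ h)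
      · exact Finset.mem_union_right _ (show a ∈ ANModel (p :: ξ) from Finset.mem_union_right _ h)

lemma Eval_mono {G G' : Finset ℕ} {M V : Tm} (h : Eval G M G' V) : G ⊆ G' := by
  induction h with
  | val _ => exact subset_rfl
  | app _ _ _ _ ih1 ih2 ih3 => exact (ih1.trans ih2).trans ih3
  | gensym r _ _ _ ih1 ih2 => exact (ih1.trans ih2).trans (Finset.subset_insert r _)
  | pair _ _ ih1 ih2 => exact ih1.trans ih2
  | fst _ ih => exact ih
  | snd _ ih => exact ih
  | condT _ _ ih1 ih2 => exact ih1.trans ih2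
  | condF _ _ ih1 ih2 => exact ih1.trans ih2
  | letin _ _ _ ih1 ih2 => exact ih1.trans ih2
  | eqT _ _ ih1 ih2 => exact ih1.trans ih2
  | eqF _ _ _ ih1 ih2 => exact ih1.trans ih2
  | eqBoolT _ _ _ ih1 ih2 => exact ih1.trans ih2
  | eqBoolF _ _ _ ih1 ih2 => exact ih1.trans ih2

lemma Eval_AN {G G' : Finset ℕ} {M V : Tm} {r : ℕ} (h : Eval G M G' V)
    (hG : r ∈ G) (hM : r ∉ AN M) : r ∉ AN V := by
  induction h generalizing r with
  | val _ => exact hM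
  | @app G G₁ G₂ G₃ M N B V W x α h1 h2 _ h3 ih1 ih2 ih3 =>
      simp only [AN, Finset.mem_union, not_or] at hM
      have hB : r ∉ AN B := ih1 hG hM.1
      have hW : r ∉ AN W := ih2 (Eval_mono h1 hG) hM.2
      refine ih3 ((Eval_mono h1).trans (Eval_mono h2) hG) ?_
      intro hc
      rcases Finset.mem_union.mp (AN_subst _ _ _ hc) with h | h
      · exact hB h
      · exact hW h
  | @gensym G G₁ G₂ M N s h1 h2 hs ih1 ih2 =>
      have : r ∈ G₂ := (Eval_mono h1).trans (Eval_mono h2) hG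
      simp only [AN, Finset.mem_singleton]
      rintro rfl; exact hs this
  | @pair G G₁ G₂ M N V W h1 h2 ih1 ih2 =>
      simp only [AN, Finset.mem_union, not_or] at hM ⊢
      exact ⟨ih1 hG hM.1, ih2 (Eval_mono h1 hG) hM.2⟩
  | fst h1 ih =>
      have := ih hG hM
      simp only [AN, Finset.mem_union, not_or] at this
      exact this.1
  | snd h1 ih =>
      have := ih hG hM
      simp only [AN, Finset.mem_union, not_or] at this
      exact this.2
  | condT h1 h2 ih1 ih2 =>
      simp only [AN, Finset.mem_union, not_or] at hM
      exact ih2 (Eval_mono h1 hG) hM.1.2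
  | condF h1 h2 ih1 ih2 =>
      simp only [AN, Finset.mem_union, not_or] at hM
      exact ih2 (Eval_mono h1 hG) hM.2
  | @letin G G₁ G₂ M N W V x h1 _ h2 ih1 ih2 =>
      simp only [AN, Finset.mem_union, not_or] at hM
      have hW : r ∉ AN W := ih1 hG hM.1
      refine ih2 (Eval_mono h1 hG) ?_
      intro hc
      rcases Finset.mem_union.mp (AN_subst _ _ _ hc) with h | h
      · exact hM.2 h
      · exact hW h
  | eqT _ _ _ _ => simp [AN]
  | eqF _ _ _ _ _ => simp [AN]
  | eqBoolT _ _ _ _ _ => simp [AN]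
  | eqBoolF _ _ _ _ _ => simp [AN]

/-- Freshly generated names are underivable: if `r` does not occur in
the model `ξ`, no name-free term typed over `ξ`'s context, closed by `ξ`, can
evaluate to the name `r`. -/
theorem fresh_name_underivable_from_model :
    ∀ (Γ : Ctx) (ξ : Model) (r : ℕ),
      ModelTyped Γ ξ → r ∉ ANModel ξ →
      ¬ ∃ (M : Tm) (G' : Finset ℕ),
          AN M = ∅ ∧ Typed Γ M Ty.nm ∧
          Eval (insert r (ANModel ξ)) (msubst ξ M) G' (Tm.name r) := by
  intro Γ ξ r _ hr ⟨M, G', hAN, _, hev⟩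
  have hM : r ∉ AN (msubst ξ M) := by
    intro hc
    rcases Finset.mem_union.mp (AN_msubst ξ M hc) with h | h
    · simp [hAN] at h
    · exact hr h
  have := Eval_AN hev (Finset.mem_insert_self r _) hM
  simp [AN] at this
end

section
/- Thinning for freshness predicates: if the freshness assertion x # Γ₀ is well-typed in a context not containing y, where Γ₀ is a sub-context of the part of the ambient context before y, then satisfaction of x # Γ₀ is preserved when removing y from the model: ξ ⊨ x # Γ₀ implies ξ∖y ⊨ x # Γ₀. -/
/-! ### Auxiliary lemmas -/

section Aux

lemma fv_typed : ∀ {Γ M α}, Typed Γ M α → FV M ⊆ (Γ.map Prod.fst).toFinset := by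
  intro Γ M α h
  induction h with
  | var h =>
    rename_i Γ x α
    simp only [lookupVar, Option.map_eq_some_iff] at h
    obtain ⟨p, hp, -⟩ := h
    have hmem := List.mem_of_find?_eq_some hp
    have hx : p.1 = x := by simpa using List.find?_some hp
    simp only [FV, Finset.singleton_subset_iff, List.mem_toFinset, List.mem_map]
    exact ⟨p, by simpa using hmem, hx⟩
  | lam _ ih =>
    simp only [FV]
    intro z hz
    simp only [Finset.mem_sdiff, Finset.mem_singleton] at hz
    have := ih hz.1
    simp only [List.map_append, List.toFinset_append, Finset.mem_union] at this
    rcases this with h | h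
    · exact h
    · simp at h; exact absurd h hz.2
  | letin _ _ ih1 ih2 =>
    simp only [FV, Finset.union_subset_iff]
    refine ⟨ih1, ?_⟩
    intro z hz
    simp only [Finset.mem_sdiff, Finset.mem_singleton] at hz
    have := ih2 hz.1
    simp only [List.map_append, List.toFinset_append, Finset.mem_union] at this
    rcases this with h | h
    · exact h
    · simp at h; exact absurd h hz.2
  | _ =>
    first
    | (simp only [FV]; exact Finset.empty_subset _)
    | (simp only [FV, Finset.union_subset_iff]; tauto)

lemma subst_of_not_mem_fv : ∀ {N} (x : ℕ) (V : Tm), x ∉ FV N → subst x V N = N := by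
  intro N
  induction N with
  | var y => intro x V h; simp only [FV, Finset.mem_singleton] at h; simp [subst, Ne.symm h]
  | lam y α M ih =>
    intro x V h
    simp only [FV, Finset.mem_sdiff, Finset.mem_singleton, not_and, not_not] at h
    by_cases hyx : y = x
    · simp [subst, hyx]
    · simp only [subst, hyx, if_false]
      rw [ih x V (fun hm => hyx (h hm).symm)]
  | letin y M N ihM ihN =>
    intro x V h
    simp only [FV, Finset.mem_union, Finset.mem_sdiff, Finset.mem_singleton, not_or, not_and,
      not_not] at h
    by_cases hyx : y = x
    · simp [subst, hyx, ihM x V h.1]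
    · simp [subst, hyx, ihM x V h.1, ihN x V (fun hm => hyx (h.2 hm).symm)]
  | _ =>
    intro x V h <;>
    simp_all [FV, subst, Finset.mem_union, not_or]

private lemma sd_mono {A B C : Finset ℕ} {x : ℕ} (h : A ⊆ B) :
    A \ {x} ∪ C ⊆ B \ {x} ∪ C :=
  Finset.union_subset_union (Finset.sdiff_subset_sdiff h le_rfl) le_rfl

lemma fv_subst : ∀ {N} (x : ℕ) (V : Tm), FV (subst x V N) ⊆ (FV N \ {x}) ∪ FV V := by
  intro N
  induction N with
  | var y =>
    intro x V
    by_cases h : y = x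
    · simp [subst, h, FV]
    · simp [subst, h, FV]
  | lam y α M ih =>
    intro x V
    by_cases h : y = x
    · simp only [subst, h, if_true]
      intro z hz
      simp only [FV, Finset.mem_sdiff, Finset.mem_singleton] at hz
      simp only [Finset.mem_union, Finset.mem_sdiff, FV, Finset.mem_singleton]
      exact Or.inl ⟨⟨hz.1, hz.2⟩, hz.2⟩
    · simp only [subst, h, if_false, FV]
      intro z hz
      simp only [Finset.mem_sdiff, Finset.mem_singleton] at hz
      have := ih x V hz.1
      simp only [Finset.mem_union, Finset.mem_sdiff, Finset.mem_singleton] at this ⊢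
      rcases this with ⟨h1, h2⟩ | h1
      · exact Or.inl ⟨⟨h1, hz.2⟩, h2⟩
      · exact Or.inr h1
  | letin y M N ihM ihN =>
    intro x V
    simp only [subst, FV]
    intro z hz
    simp only [Finset.mem_union, Finset.mem_sdiff, Finset.mem_singleton] at hz ⊢
    rcases hz with hz | ⟨hz, hzy⟩
    · have := ihM x V hz
      simp only [Finset.mem_union, Finset.mem_sdiff, Finset.mem_singleton] at this
      tauto
    · by_cases h : y = x
      · simp only [h, if_true] at hz
        exact Or.inl ⟨Or.inr ⟨hz, hzy⟩, h ▸ hzy⟩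
      · simp only [h, if_false] at hz
        have := ihN x V hz
        simp only [Finset.mem_union, Finset.mem_sdiff, Finset.mem_singleton] at this
        tauto
  | app M N ih1 ih2 =>
    intro x V
    simp only [subst, FV]
    exact Finset.union_subset ((ih1 x V).trans (sd_mono Finset.subset_union_left))
      ((ih2 x V).trans (sd_mono Finset.subset_union_right))
  | pair M N ih1 ih2 =>
    intro x V
    simp only [subst, FV]
    exact Finset.union_subset ((ih1 x V).trans (sd_mono Finset.subset_union_left))
      ((ih2 x V).trans (sd_mono Finset.subset_union_right))
  | eq M N ih1 ih2 =>
    intro x V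
    simp only [subst, FV]
    exact Finset.union_subset ((ih1 x V).trans (sd_mono Finset.subset_union_left))
      ((ih2 x V).trans (sd_mono Finset.subset_union_right))
  | fst M ih => intro x V; simp only [subst, FV]; exact ih x V
  | snd M ih => intro x V; simp only [subst, FV]; exact ih x V
  | cond M N₁ N₂ ih1 ih2 ih3 =>
    intro x V
    simp only [subst, FV]
    refine Finset.union_subset (Finset.union_subset ?_ ?_) ?_
    · exact (ih1 x V).trans (sd_mono (Finset.subset_union_left.trans Finset.subset_union_left))
    · exact (ih2 x V).trans (sd_mono (Finset.subset_union_right.trans Finset.subset_union_left))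
    · exact (ih3 x V).trans (sd_mono Finset.subset_union_right)
  | _ => intro x V; simp [subst, FV]

lemma an_subst : ∀ {N} (x : ℕ) (V : Tm), AN (subst x V N) ⊆ AN N ∪ AN V := by
  intro N
  induction N with
  | var y => intro x V; by_cases h : y = x <;> simp [subst, h, AN]
  | lam y α M ih =>
    intro x V
    by_cases h : y = x <;> simp only [subst, h, if_true, if_false, AN]
    · exact Finset.subset_union_left
    · exact ih x V
  | letin y M N ihM ihN =>
    intro x V
    by_cases h : y = x <;>
      simp only [subst, h, if_true, if_false, AN] <;>
      refine Finset.union_subset ?_ ?_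
    · exact (ihM x V).trans
        (Finset.union_subset_union Finset.subset_union_left le_rfl)
    · exact (Finset.subset_union_right : AN N ⊆ AN M ∪ AN N).trans Finset.subset_union_left
    · exact (ihM x V).trans
        (Finset.union_subset_union Finset.subset_union_left le_rfl)
    · exact (ihN x V).trans
        (Finset.union_subset_union Finset.subset_union_right le_rfl)
  | app M N ih1 ih2 =>
    intro x V
    simp only [subst, AN]
    exact Finset.union_subset
      ((ih1 x V).trans (Finset.union_subset_union Finset.subset_union_left le_rfl))
      ((ih2 x V).trans (Finset.union_subset_union Finset.subset_union_right le_rfl))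
  | pair M N ih1 ih2 =>
    intro x V
    simp only [subst, AN]
    exact Finset.union_subset
      ((ih1 x V).trans (Finset.union_subset_union Finset.subset_union_left le_rfl))
      ((ih2 x V).trans (Finset.union_subset_union Finset.subset_union_right le_rfl))
  | eq M N ih1 ih2 =>
    intro x V
    simp only [subst, AN]
    exact Finset.union_subset
      ((ih1 x V).trans (Finset.union_subset_union Finset.subset_union_left le_rfl))
      ((ih2 x V).trans (Finset.union_subset_union Finset.subset_union_right le_rfl))
  | fst M ih => intro x V; simp only [subst, AN]; exact ih x V
  | snd M ih => intro x V; simp only [subst, AN]; exact ih x V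
  | cond M N₁ N₂ ih1 ih2 ih3 =>
    intro x V
    simp only [subst, AN]
    refine Finset.union_subset (Finset.union_subset ?_ ?_) ?_
    · exact (ih1 x V).trans (Finset.union_subset_union
        (Finset.subset_union_left.trans Finset.subset_union_left) le_rfl)
    · exact (ih2 x V).trans (Finset.union_subset_union
        (Finset.subset_union_right.trans Finset.subset_union_left) le_rfl)
    · exact (ih3 x V).trans (Finset.union_subset_union Finset.subset_union_right le_rfl)
  | _ => intro x V; simp [subst, AN]

end Aux

section Aux2

lemma msubst_append (l1 l2 : Model) (M : Tm) :
    msubst (l1 ++ l2) M = msubst l2 (msubst l1 M) := by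
  simp [msubst, List.foldl_append]

lemma msubst_closed : ∀ (ξ : Model) {N : Tm}, FV N = ∅ → msubst ξ N = N := by
  intro ξ
  induction ξ with
  | nil => intro N _; rfl
  | cons p ξ ih =>
    intro N h
    have : subst p.1 p.2 N = N := subst_of_not_mem_fv p.1 p.2 (by simp [h])
    simp only [msubst, List.foldl_cons, this]
    exact ih h

lemma fv_msubst : ∀ {Γ : Ctx} {ξ : Model}, ModelTyped Γ ξ → ∀ (M : Tm),
    FV (msubst ξ M) ⊆ FV M \ (Γ.map Prod.fst).toFinset := by
  intro Γ ξ h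
  induction h with
  | nil => intro M; simp [msubst]
  | @cons Γ ξ x α V hV hT _ ih =>
    intro M
    have hVc : FV V = ∅ := by
      have := fv_typed hT
      simpa using Finset.subset_empty.mp (by simpa using this)
    have h1 : FV (subst x V M) ⊆ FV M \ {x} := by
      have := fv_subst (N := M) x V
      rwa [hVc, Finset.union_empty] at this
    have h2 := ih (subst x V M)
    refine (show msubst ((x, V) :: ξ) M = msubst ξ (subst x V M) from rfl) ▸ ?_
    refine h2.trans ?_
    intro z hz
    simp only [Finset.mem_sdiff] at hz
    have := h1 hz.1
    simp only [Finset.mem_sdiff, Finset.mem_singleton, List.map_cons, List.toFinset_cons,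
      Finset.mem_insert, not_or] at *
    exact ⟨this.1, this.2, hz.2⟩

lemma anmodel_append (l1 l2 : Model) :
    ANModel (l1 ++ l2) = ANModel l1 ∪ ANModel l2 := by
  induction l1 with
  | nil => simp [ANModel]
  | cons p l ih =>
    simp only [ANModel, List.foldr_cons, List.cons_append] at *
    rw [ih, Finset.union_assoc]

lemma an_mem_model : ∀ {ξ : Model} {p : ℕ × Tm}, p ∈ ξ → AN p.2 ⊆ ANModel ξ := by
  intro ξ
  induction ξ with
  | nil => intro p h; cases h
  | cons q ξ ih =>
    intro p h
    rcases List.mem_cons.mp h with h | h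
    · subst h; exact Finset.subset_union_left
    · exact (ih h).trans Finset.subset_union_right

lemma an_msubst : ∀ (ξ : Model) (M : Tm), AN (msubst ξ M) ⊆ AN M ∪ ANModel ξ := by
  intro ξ
  induction ξ with
  | nil => intro M; simp [msubst, ANModel]
  | cons p ξ ih =>
    intro M
    have h1 : AN (subst p.1 p.2 M) ⊆ AN M ∪ AN p.2 := an_subst p.1 p.2
    refine ((show msubst (p :: ξ) M = msubst ξ (subst p.1 p.2 M) from rfl) ▸
      ih (subst p.1 p.2 M)).trans ?_
    intro z hz
    simp only [Finset.mem_union, ANModel, List.foldr_cons] at *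
    rcases hz with hz | hz
    · rcases Finset.mem_union.mp (h1 hz) with h | h
      · exact Or.inl h
      · exact Or.inr (Or.inl h)
    · exact Or.inr (Or.inr hz)

lemma modeltyped_keys : ∀ {Γ : Ctx} {ξ : Model}, ModelTyped Γ ξ →
    Γ.map Prod.fst = ξ.map Prod.fst := by
  intro Γ ξ h
  induction h with
  | nil => rfl
  | cons _ _ _ ih => simp [ih]

/-- Evaluation only grows the name set. -/
lemma eval_mono : ∀ {G M G' V}, Eval G M G' V → G ⊆ G' := by
  intro G M G' V h
  induction h with
  | val _ => exact Finset.Subset.refl _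
  | app _ _ _ _ ih1 ih2 ih3 => exact ih1.trans (ih2.trans ih3)
  | gensym r _ _ _ ih1 ih2 =>
    exact (ih1.trans ih2).trans (Finset.subset_insert _ _)
  | pair _ _ ih1 ih2 => exact ih1.trans ih2
  | fst _ ih => exact ih
  | snd _ ih => exact ih
  | condT _ _ ih1 ih2 => exact ih1.trans ih2
  | condF _ _ ih1 ih2 => exact ih1.trans ih2
  | letin _ _ _ ih1 ih2 => exact ih1.trans ih2
  | eqT _ _ ih1 ih2 => exact ih1.trans ih2
  | eqF _ _ _ ih1 ih2 => exact ih1.trans ih2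
  | eqBoolT _ _ _ ih1 ih2 => exact ih1.trans ih2
  | eqBoolF _ _ _ ih1 ih2 => exact ih1.trans ih2

/-- Weakening of the initial name set by names not generated during evaluation. -/
lemma eval_weaken : ∀ {G M G' V}, Eval G M G' V → ∀ S : Finset ℕ,
    (∀ r ∈ S, r ∈ G' → r ∈ G) → Eval (G ∪ S) M (G' ∪ S) V := by
  intro G M G' V h
  induction h with
  | val hv => intro S _; exact Eval.val hv
  | app h1 h2 hW h3 ih1 ih2 ih3 =>
    intro S hS
    refine Eval.app (ih1 S ?_) (ih2 S ?_) hW (ih3 S ?_)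
    · exact fun r hr hr' => hS r hr (eval_mono h3 (eval_mono h2 hr'))
    · intro r hr hr'
      exact eval_mono h1 (hS r hr (eval_mono h3 hr'))
    · intro r hr hr'
      exact eval_mono h2 (eval_mono h1 (hS r hr hr'))
  | gensym r h1 h2 hr ih1 ih2 =>
    intro S hS
    rename_i G G₁ G₂ M N
    have hrS : r ∉ S := fun hrS =>
      hr (eval_mono h2 (eval_mono h1 (hS r hrS (Finset.mem_insert_self _ _))))
    have : insert r G₂ ∪ S = insert r (G₂ ∪ S) := by
      rw [Finset.insert_union]
    rw [this]
    refine Eval.gensym r (ih1 S ?_) (ih2 S ?_) ?_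
    · exact fun s hs hs' => hS s hs (Finset.mem_insert_of_mem (eval_mono h2 hs'))
    · exact fun s hs hs' => eval_mono h1 (hS s hs (Finset.mem_insert_of_mem hs'))
    · simp only [Finset.mem_union, not_or]
      exact ⟨hr, hrS⟩
  | pair h1 h2 ih1 ih2 =>
    intro S hS
    exact Eval.pair (ih1 S (fun r hr hr' => hS r hr (eval_mono h2 hr'))) (ih2 S
      (fun r hr hr' => eval_mono h1 (hS r hr hr')))
  | fst h1 ih => intro S hS; exact Eval.fst (ih S hS)
  | snd h1 ih => intro S hS; exact Eval.snd (ih S hS)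
  | condT h1 h2 ih1 ih2 =>
    intro S hS
    exact Eval.condT (ih1 S (fun r hr hr' => hS r hr (eval_mono h2 hr'))) (ih2 S
      (fun r hr hr' => eval_mono h1 (hS r hr hr')))
  | condF h1 h2 ih1 ih2 =>
    intro S hS
    exact Eval.condF (ih1 S (fun r hr hr' => hS r hr (eval_mono h2 hr'))) (ih2 S
      (fun r hr hr' => eval_mono h1 (hS r hr hr')))
  | letin h1 hW h2 ih1 ih2 =>
    intro S hS
    exact Eval.letin (ih1 S (fun r hr hr' => hS r hr (eval_mono h2 hr'))) hW (ih2 S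
      (fun r hr hr' => eval_mono h1 (hS r hr hr')))
  | eqT h1 h2 ih1 ih2 =>
    intro S hS
    exact Eval.eqT (ih1 S (fun r hr hr' => hS r hr (eval_mono h2 hr'))) (ih2 S
      (fun r hr hr' => eval_mono h1 (hS r hr hr')))
  | eqF h1 h2 hne ih1 ih2 =>
    intro S hS
    exact Eval.eqF (ih1 S (fun r hr hr' => hS r hr (eval_mono h2 hr'))) (ih2 S
      (fun r hr hr' => eval_mono h1 (hS r hr hr'))) hne
  | eqBoolT h1 h2 hb ih1 ih2 =>
    intro S hS
    exact Eval.eqBoolT (ih1 S (fun r hr hr' => hS r hr (eval_mono h2 hr'))) (ih2 S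
      (fun r hr hr' => eval_mono h1 (hS r hr hr'))) hb
  | eqBoolF h1 h2 hb ih1 ih2 =>
    intro S hS
    exact Eval.eqBoolF (ih1 S (fun r hr hr' => hS r hr (eval_mono h2 hr'))) (ih2 S
      (fun r hr hr' => eval_mono h1 (hS r hr hr'))) hb

end Aux2

section Aux3

/-- Renaming of name constants in a term. -/
def ren (f : ℕ → ℕ) : Tm → Tm
  | .name r => .name (f r)
  | .lam x α M => .lam x α (ren f M)
  | .app M N => .app (ren f M) (ren f N)
  | .pair M N => .pair (ren f M) (ren f N)
  | .fst M => .fst (ren f M)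
  | .snd M => .snd (ren f M)
  | .cond M N₁ N₂ => .cond (ren f M) (ren f N₁) (ren f N₂)
  | .letin x M N => .letin x (ren f M) (ren f N)
  | .eq M N => .eq (ren f M) (ren f N)
  | t => t

lemma ren_subst (f : ℕ → ℕ) (x : ℕ) (V : Tm) : ∀ (N : Tm),
    ren f (subst x V N) = subst x (ren f V) (ren f N) := by
  intro N
  induction N with
  | var y => by_cases h : y = x <;> simp [subst, ren, h]
  | lam y α M ih => by_cases h : y = x <;> simp [subst, ren, h, ih]
  | letin y M N ihM ihN => by_cases h : y = x <;> simp [subst, ren, h, ihM, ihN]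
  | _ => simp_all [subst, ren]

lemma isValue_ren {f : ℕ → ℕ} : ∀ {V : Tm}, IsValue V → IsValue (ren f V) := by
  intro V h
  induction h with
  | pair _ _ ih1 ih2 => exact IsValue.pair ih1 ih2
  | var x => exact IsValue.var x
  | unit => exact IsValue.unit
  | tt => exact IsValue.tt
  | ff => exact IsValue.ff
  | name r => exact IsValue.name (f r)
  | gensym => exact IsValue.gensym
  | lam x α M => exact IsValue.lam x α (ren f M)

lemma ren_id_of_an : ∀ {M : Tm} {f : ℕ → ℕ}, (∀ r ∈ AN M, f r = r) → ren f M = M := by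
  intro M
  induction M with
  | name r => intro f h; simpa [ren] using h r (by simp [AN])
  | lam x α M ih => intro f h; simp only [ren]; rw [ih (by simpa [AN] using h)]
  | app M N ih1 ih2 =>
    intro f h
    simp only [ren]
    rw [ih1 (fun r hr => h r (by simp [AN, hr])), ih2 (fun r hr => h r (by simp [AN, hr]))]
  | pair M N ih1 ih2 =>
    intro f h
    simp only [ren]
    rw [ih1 (fun r hr => h r (by simp [AN, hr])), ih2 (fun r hr => h r (by simp [AN, hr]))]
  | eq M N ih1 ih2 =>
    intro f h
    simp only [ren]
    rw [ih1 (fun r hr => h r (by simp [AN, hr])), ih2 (fun r hr => h r (by simp [AN, hr]))]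
  | letin x M N ih1 ih2 =>
    intro f h
    simp only [ren]
    rw [ih1 (fun r hr => h r (by simp [AN, hr])), ih2 (fun r hr => h r (by simp [AN, hr]))]
  | fst M ih => intro f h; simp only [ren]; rw [ih (by simpa [AN] using h)]
  | snd M ih => intro f h; simp only [ren]; rw [ih (by simpa [AN] using h)]
  | cond M N₁ N₂ ih1 ih2 ih3 =>
    intro f h
    simp only [ren]
    rw [ih1 (fun r hr => h r (by simp [AN, hr])), ih2 (fun r hr => h r (by simp [AN, hr])),
      ih3 (fun r hr => h r (by simp [AN, hr]))]
  | _ => intro f h; rfl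

/-- Equivariance of evaluation under injective renaming of names. -/
lemma eval_ren {f : ℕ → ℕ} (hf : Function.Injective f) :
    ∀ {G M G' V}, Eval G M G' V →
      Eval (G.image f) (ren f M) (G'.image f) (ren f V) := by
  intro G M G' V h
  induction h with
  | val hv => exact Eval.val (isValue_ren hv)
  | app h1 h2 hW h3 ih1 ih2 ih3 =>
    rw [ren_subst] at ih3
    exact Eval.app (by simpa [ren] using ih1) ih2 (isValue_ren hW) ih3
  | gensym r h1 h2 hr ih1 ih2 =>
    rename_i G G₁ G₂ M N
    have : (insert r G₂).image f = insert (f r) (G₂.image f) := Finset.image_insert f r G₂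
    rw [show ren f (Tm.name r) = Tm.name (f r) from rfl, this]
    refine Eval.gensym (f r) (by simpa [ren] using ih1) (by simpa [ren] using ih2) ?_
    intro hmem
    obtain ⟨s, hs, hfs⟩ := Finset.mem_image.mp hmem
    exact hr (hf hfs ▸ hs)
  | pair _ _ ih1 ih2 => exact Eval.pair ih1 ih2
  | fst _ ih => exact Eval.fst (by simpa [ren] using ih)
  | snd _ ih => exact Eval.snd (by simpa [ren] using ih)
  | condT _ _ ih1 ih2 => exact Eval.condT (by simpa [ren] using ih1) ih2
  | condF _ _ ih1 ih2 => exact Eval.condF (by simpa [ren] using ih1) ih2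
  | letin h1 hW h2 ih1 ih2 =>
    rw [ren_subst] at ih2
    exact Eval.letin ih1 (isValue_ren hW) ih2
  | eqT _ _ ih1 ih2 => exact Eval.eqT (by simpa [ren] using ih1) (by simpa [ren] using ih2)
  | eqF _ _ hne ih1 ih2 =>
    exact Eval.eqF (by simpa [ren] using ih1) (by simpa [ren] using ih2)
      (fun hc => hne (hf hc))
  | eqBoolT _ _ hb ih1 ih2 =>
    rcases hb with hb | hb <;> subst hb
    · exact Eval.eqBoolT ih1 ih2 (Or.inl rfl)
    · exact Eval.eqBoolT ih1 ih2 (Or.inr rfl)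
  | eqBoolF _ _ hb ih1 ih2 =>
    rcases hb with ⟨hb1, hb2⟩ | ⟨hb1, hb2⟩ <;> subst hb1 <;> subst hb2
    · exact Eval.eqBoolF ih1 ih2 (Or.inl ⟨rfl, rfl⟩)
    · exact Eval.eqBoolF ih1 ih2 (Or.inr ⟨rfl, rfl⟩)

lemma modelLookup_mem {ξ : Model} {x : ℕ} {W : Tm} (h : modelLookup ξ x = some W) :
    (x, W) ∈ ξ := by
  simp only [modelLookup, Option.map_eq_some_iff] at h
  obtain ⟨p, hp, hW⟩ := h
  have hmem := List.mem_of_find?_eq_some hp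
  have hx : p.1 = x := by simpa using List.find?_some hp
  have : p = (x, W) := by rw [← hx, ← hW]
  exact this ▸ (List.mem_reverse.mp hmem)

/-- The key transfer lemma: evaluation over a name set `G` containing all names of the
term and result transfers to any larger finite name set `H`. -/
lemma eval_enlarge {G H G' : Finset ℕ} {T W : Tm}
    (hGH : G ⊆ H) (hT : AN T ⊆ G) (hW : AN W ⊆ G)
    (h : Eval G T G' W) : ∃ G'', Eval H T G'' W := by
  classical
  set N : ℕ := (H ∪ G').sup id + 1 with hN
  have hNbig : ∀ r ∈ H ∪ G', r < N := by
    intro r hr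
    have : r ≤ (H ∪ G').sup id := Finset.le_sup (f := id) hr
    omega
  set f : ℕ → ℕ := fun n => if n ∈ G then n else n + N with hfdef
  have hfG : ∀ r ∈ G, f r = r := fun r hr => by simp [hfdef, hr]
  have hf : Function.Injective f := by
    intro a b hab
    by_cases ha : a ∈ G <;> by_cases hb : b ∈ G <;> simp only [hfdef, ha, hb, if_true, if_false] at hab
    · exact hab
    · exfalso; have := hNbig a (Finset.mem_union_left _ (hGH ha)); omega
    · exfalso; have := hNbig b (Finset.mem_union_left _ (hGH hb)); omega
    · omega
  have hGim : G.image f = G := by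
    apply Finset.image_congr (g := id) (fun r hr => hfG r hr) |>.trans (Finset.image_id)
  have hTren : ren f T = T := ren_id_of_an (fun r hr => hfG r (hT hr))
  have hWren : ren f W = W := ren_id_of_an (fun r hr => hfG r (hW hr))
  have h2 : Eval G T (G'.image f) W := by
    have := eval_ren hf h
    rwa [hGim, hTren, hWren] at this
  have h3 : ∀ r ∈ H, r ∈ G'.image f → r ∈ G := by
    intro r hrH hrim
    obtain ⟨s, hs, hfs⟩ := Finset.mem_image.mp hrim
    by_cases hsG : s ∈ G
    · rwa [← hfs, hfG s hsG]
    · exfalso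
      have : f s = s + N := by simp [hfdef, hsG]
      have hrlt := hNbig r (Finset.mem_union_left _ hrH)
      omega
  have h4 := eval_weaken h2 H h3
  rw [Finset.union_eq_right.mpr hGH] at h4
  exact ⟨_, h4⟩

end Aux3

/-- Thinning for freshness predicates: if `x # Γ₀` is well-typed in
a context not containing `y` (with `Γ₀` a sub-context of the part of the ambient
context before `y`), then satisfaction of `x # Γ₀` is preserved when the binding
of `y` is removed from the model. -/
theorem freshness_predicate_thinning :
    ∀ (Γa Γb Γ₀ : Ctx) (ξa ξb : Model) (y : ℕ) (αy : Ty) (Vy : Tm)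
      (x : ℕ) (W : Tm),
      ModelTyped Γa ξa → ModelTyped Γb ξb →
      IsValue Vy → Typed [] Vy αy →
      Γ₀.Sublist Γa → x ≠ y →
      lookupVar (Γa ++ Γb) x = some Ty.nm →
      modelLookup (ξa ++ (y, Vy) :: ξb) x = some W →
      (¬ ∃ (M : Tm) (G' : Finset ℕ), AN M = ∅ ∧ Typed Γ₀ M Ty.nm ∧
          Eval (ANModel (ξa ++ (y, Vy) :: ξb)) (msubst (ξa ++ (y, Vy) :: ξb) M) G' W) →
      ¬ ∃ (M : Tm) (G' : Finset ℕ), AN M = ∅ ∧ Typed Γ₀ M Ty.nm ∧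
          Eval (ANModel (ξa ++ ξb)) (msubst (ξa ++ ξb) M) G' W := by
  intro Γa Γb Γ₀ ξa ξb y αy Vy x W hMa hMb hVy hTVy hsub hxy hlook hmlook hfull
  rintro ⟨M, G', hAN, hTyped, hEval⟩
  apply hfull
  -- the closure of `M` only uses the bindings of `ξa`
  have hFVM : FV M ⊆ (Γa.map Prod.fst).toFinset := by
    refine (fv_typed hTyped).trans ?_
    intro z hz
    simp only [List.mem_toFinset] at *
    exact (hsub.map Prod.fst).subset hz
  have hclosed : FV (msubst ξa M) = ∅ := by
    refine Finset.subset_empty.mp ?_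
    refine (fv_msubst hMa M).trans ?_
    intro z hz
    exact absurd (hFVM (Finset.mem_sdiff.mp hz).1) (Finset.mem_sdiff.mp hz).2
  have hT1 : msubst (ξa ++ ξb) M = msubst ξa M := by
    rw [msubst_append, msubst_closed _ hclosed]
  have hT2 : msubst (ξa ++ (y, Vy) :: ξb) M = msubst ξa M := by
    rw [msubst_append, msubst_closed _ hclosed]
  rw [hT1] at hEval
  -- name sets
  have hGH : ANModel (ξa ++ ξb) ⊆ ANModel (ξa ++ (y, Vy) :: ξb) := by
    rw [anmodel_append, anmodel_append]
    refine Finset.union_subset_union le_rfl ?_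
    show ANModel ξb ⊆ AN Vy ∪ ANModel ξb
    exact Finset.subset_union_right
  have hANT : AN (msubst ξa M) ⊆ ANModel (ξa ++ ξb) := by
    refine (an_msubst ξa M).trans ?_
    rw [hAN, Finset.empty_union, anmodel_append]
    exact Finset.subset_union_left
  have hANW : AN W ⊆ ANModel (ξa ++ ξb) := by
    have hmem : (x, W) ∈ ξa ++ (y, Vy) :: ξb := modelLookup_mem hmlook
    have hmem' : (x, W) ∈ ξa ++ ξb := by
      rcases List.mem_append.mp hmem with h | h
      · exact List.mem_append.mpr (Or.inl h)
      · rcases List.mem_cons.mp h with h | h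
        · exact absurd (congrArg Prod.fst h) (by simpa using hxy)
        · exact List.mem_append.mpr (Or.inr h)
    exact an_mem_model hmem'
  obtain ⟨G'', hEval'⟩ := eval_enlarge hGH hANT hANW hEval
  exact ⟨M, G'', hAN, hTyped, by rwa [hT2]⟩
end
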